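/- arXiv:2508.09783 — 6 statements merged into one kernel-verified Lean document; each statement's English description precedes it below -/
import Mathlib

section
/- Let A be a finite set with |A| = n ≥ 1, let U be the uniform distribution on A, and let δ ≥ 0 with δ ≤ 1 - 1/n. For any integer s with 1 ≤ s ≤ n(1-δ), the maximum over all probability distributions P on A with statistical distance Δ(P,U) = δ of the sum of the s largest probabilities P(a) equals δ + s/n. -/
/-!
Since `P - U` has total mass zero, its mass on an event `S` is minus its mass on `Sᶜ`, so twice
it is at most `∑ |P a - 1/n| = 2 Δ(P, U)`; hence `∑_{a ∈ S} P a ≤ δ + |S|/n`. Equality is attained by spreading `δ` evenly over a set `S` of size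
`s`, raising each of its points to `1/n + δ/s`, and removing `δ` evenly from the remaining `n - s`
points, which stay nonnegative exactly because `s ≤ n(1 - δ)`.
-/

open Finset

theorem Finset.sum_ite_mem_univ {ι M : Type*} [Fintype ι] [DecidableEq ι] [AddCommMonoid M]
    (S : Finset ι) (x y : M) :
    ∑ a, (if a ∈ S then x else y) = #S • x + #Sᶜ • y := by
  rw [← sum_add_sum_compl S, sum_ite_of_true (fun _ => id), sum_ite_of_false (fun _ => mem_compl.1),
    sum_const, sum_const]

theorem Finset.sum_le_half_sum_abs_of_sum_eq_zero {ι : Type*} [Fintype ι] (S : Finset ι)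
    {f : ι → ℝ} (hf : ∑ a, f a = 0) : ∑ a ∈ S, f a ≤ (1 / 2) * ∑ a, |f a| := by
  classical
  have hS : ∑ a ∈ S, f a = -∑ a ∈ Sᶜ, f a := by
    rw [eq_neg_iff_add_eq_zero, sum_add_sum_compl, hf]
  have hSc : -∑ a ∈ Sᶜ, f a ≤ ∑ a ∈ Sᶜ, |f a| := by
    rw [← sum_neg_distrib]; exact sum_le_sum fun a _ => neg_le_abs (f a)
  have hSabs := sum_le_sum fun a (_ : a ∈ S) => le_abs_self (f a)
  rw [← sum_add_sum_compl S (fun a => |f a|)]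
  linarith

theorem sum_le_half_sum_abs_sub_uniform_add {ι : Type*} [Fintype ι] [Nonempty ι] {P : ι → ℝ}
    (hP : ∑ a, P a = 1) (S : Finset ι) :
    ∑ a ∈ S, P a ≤ (1 / 2) * ∑ a, |P a - 1 / Fintype.card ι| + #S / Fintype.card ι := by
  have hcentered : ∑ a, (P a - 1 / Fintype.card ι) = 0 := by
    simp [sum_sub_distrib, hP]
  have := sum_le_half_sum_abs_of_sum_eq_zero S hcentered
  rw [sum_sub_distrib, sum_const, nsmul_eq_mul, mul_one_div] at this
  linarith

theorem exists_dist_uniform_eq_and_sum_eq {ι : Type*} [Fintype ι] [DecidableEq ι]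
    (S : Finset ι) (hS : S.Nonempty) {δ : ℝ} (hδ : 0 ≤ δ)
    (hSδ : (#S : ℝ) ≤ Fintype.card ι * (1 - δ)) :
    ∃ P : ι → ℝ, (∀ a, 0 ≤ P a) ∧ ∑ a, P a = 1 ∧
      (1 / 2) * ∑ a, |P a - 1 / Fintype.card ι| = δ ∧
      ∑ a ∈ S, P a = δ + #S / Fintype.card ι := by
  set n : ℝ := (Fintype.card ι : ℝ)
  set s : ℝ := (#S : ℝ)
  have hs : 0 < s := by simpa [s] using hS.card_pos
  have hsn : s ≤ n := Nat.cast_le.2 (card_le_univ S)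
  have hn : 0 < n := hs.trans_le hsn
  have hms : 0 ≤ n - s := sub_nonneg.2 hsn
  have hcompl : (#Sᶜ : ℝ) = n - s := by
    rw [card_compl, Nat.cast_sub (card_le_univ S)]
  -- when `S = univ` we have `δ = 0`, and `δ / 0 = 0` makes the formula below still correct
  have hmass : (n - s) * (δ / (n - s)) = δ := by
    rcases eq_or_ne (n - s) 0 with h | h
    · have : δ = 0 := by nlinarith
      simp [this]
    · exact mul_div_cancel₀ δ h
  have hstep_le : δ / (n - s) ≤ 1 / n := by
    rcases eq_or_ne (n - s) 0 with h | h
    · rw [h, div_zero]; positivity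
    · rw [div_le_div_iff₀ (lt_of_le_of_ne hms h.symm) hn]; nlinarith
  refine ⟨fun a => if a ∈ S then 1 / n + δ / s else 1 / n - δ / (n - s), fun a => ?_, ?_, ?_, ?_⟩
  · dsimp only
    split_ifs <;> [positivity; linarith]
  · rw [sum_ite_mem_univ, nsmul_eq_mul, nsmul_eq_mul, hcompl, mul_sub, hmass]
    field_simp
    ring
  · simp_rw [apply_ite (fun x => |x - 1 / n|), add_sub_cancel_left, sub_sub_cancel_left, abs_neg,
      abs_of_nonneg (div_nonneg hδ hs.le), abs_of_nonneg (div_nonneg hδ hms)]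
    rw [sum_ite_mem_univ, nsmul_eq_mul, nsmul_eq_mul, hcompl, hmass]
    field_simp
    ring
  · rw [sum_ite_of_true (fun _ => id), sum_const, nsmul_eq_mul]
    field_simp
    ring

theorem stmt_0_general {A : Type*} [Fintype A] (n : ℕ)
    (hn : Fintype.card A = n)
    (δ : ℝ) (hδ0 : 0 ≤ δ)
    (s : ℕ) (hs1 : 1 ≤ s) (hs2 : (s : ℝ) ≤ n * (1 - δ)) :
    IsGreatest
      {v : ℝ | ∃ (P : A → ℝ) (S : Finset A),
        (∀ a, 0 ≤ P a) ∧ (∑ a, P a) = 1 ∧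
        (1 / 2) * ∑ a, |P a - 1 / n| = δ ∧
        S.card = s ∧ v = ∑ a ∈ S, P a}
      (δ + s / n) := by
  classical
  subst hn
  constructor
  · have hs : s ≤ #(univ : Finset A) := by
      rw [card_univ, ← Nat.cast_le (α := ℝ)]
      exact hs2.trans (by nlinarith)
    obtain ⟨S, -, rfl⟩ := exists_subset_card_eq hs
    obtain ⟨P, hP0, hP1, hPδ, hPS⟩ :=
      exists_dist_uniform_eq_and_sum_eq S (card_pos.1 hs1) hδ0 hs2
    exact ⟨P, S, hP0, hP1, hPδ, rfl, hPS.symm⟩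
  · rintro _ ⟨P, S, -, hP1, hPδ, rfl, rfl⟩
    obtain ⟨a, -⟩ := card_pos.1 hs1
    have : Nonempty A := ⟨a⟩
    exact hPδ ▸ sum_le_half_sum_abs_sub_uniform_add hP1 S

/-- For a finite set `A` with `|A| = n ≥ 1`, uniform distribution `U`,
`0 ≤ δ ≤ 1 - 1/n`, and integer `1 ≤ s` with `s ≤ n(1-δ)`, the maximum over all
probability distributions `P` with `Δ(P,U) = δ` of the sum of the `s` largest
probabilities (i.e. the max over subsets `S` with `|S| = s` of `∑_{a∈S} P a`)
equals `δ + s/n`. -/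
theorem stmt_0 {A : Type*} [Fintype A] [DecidableEq A] (n : ℕ)
    (hn : Fintype.card A = n) (hn1 : 1 ≤ n)
    (δ : ℝ) (hδ0 : 0 ≤ δ) (hδ1 : δ ≤ 1 - 1 / n)
    (s : ℕ) (hs1 : 1 ≤ s) (hs2 : (s : ℝ) ≤ n * (1 - δ)) :
    IsGreatest
      {v : ℝ | ∃ (P : A → ℝ) (S : Finset A),
        (∀ a, 0 ≤ P a) ∧ (∑ a, P a) = 1 ∧
        (1 / 2) * ∑ a, |P a - 1 / n| = δ ∧
        S.card = s ∧ v = ∑ a ∈ S, P a}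
      (δ + s / n) :=
  stmt_0_general n hn δ hδ0 s hs1 hs2
end

section
/- Let A be a finite set with |A| = n ≥ 1, U the uniform distribution on A, and P a probability distribution on A with Δ(P,U) = δ. If s is an integer with s > n(1-δ), then there exists a probability distribution P' on A with Δ(P',U) = δ such that the sum of the s largest values of P' equals 1, and this is the maximum possible. -/
/-!
Writing `|x - y| = x + y - 2 min(x, y)`, the distance of a distribution `Q` from uniform is
`1 - ∑ₐ min(Q a, 1/n)`. For the given `P` some value is at least `1/n`, so `δ ≤ 1 - 1/n`, and
then `s > n(1 - δ) ≥ 1`. A distribution at distance `δ` carried by `s` points is obtained by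
putting `1/n + δ` on one point and spreading the remaining `1 - 1/n - δ` evenly over `s - 1`
further points; the condition `s ≥ n(1 - δ)` is exactly what keeps these values below `1/n`.
Conversely, the `s` largest values sum to at most the total mass `1`.
-/

open Finset Fintype

lemma abs_sub_eq_add_sub_two_mul_min (x y : ℝ) : |x - y| = x + y - 2 * min x y := by
  rw [← max_sub_min_eq_abs', ← min_add_max x y]
  ring

lemma half_sum_abs_sub_eq {ι : Type*} (s : Finset ι) (f g : ι → ℝ) :
    1 / 2 * ∑ i ∈ s, |f i - g i| =
      (∑ i ∈ s, f i + ∑ i ∈ s, g i) / 2 - ∑ i ∈ s, min (f i) (g i) := by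
  simp only [abs_sub_eq_add_sub_two_mul_min, sum_sub_distrib, sum_add_distrib, ← mul_sum]
  ring

lemma sum_eq_add_card_erase_mul {A : Type*} [Fintype A] [DecidableEq A] {S : Finset A}
    {a₀ : A} (ha₀ : a₀ ∈ S) {f : A → ℝ} {c : ℝ} (hout : ∀ a ∉ S, f a = 0)
    (hrest : ∀ a ∈ S.erase a₀, f a = c) :
    ∑ a, f a = f a₀ + ((#S : ℝ) - 1) * c := by
  rw [← sum_subset (subset_univ S) fun a _ ha ↦ hout a ha, ← add_sum_erase S f ha₀,
    sum_congr rfl hrest, sum_const, card_erase_of_mem ha₀, nsmul_eq_mul,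
    Nat.cast_sub (card_pos.mpr ⟨a₀, ha₀⟩), Nat.cast_one]

section Uniform

variable {A : Type*} [Fintype A] [Nonempty A]

lemma sum_one_div_card : ∑ _a : A, (1 / card A : ℝ) = 1 := by
  simp

lemma half_sum_abs_sub_one_div_card {P : A → ℝ} (hP : ∑ a, P a = 1) :
    1 / 2 * ∑ a, |P a - 1 / card A| = 1 - ∑ a, min (P a) (1 / card A) := by
  rw [half_sum_abs_sub_eq, hP, sum_one_div_card]
  ring

lemma one_div_card_le_sum_min {P : A → ℝ} (hP0 : ∀ a, 0 ≤ P a) (hP : ∑ a, P a = 1) :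
    1 / card A ≤ ∑ a, min (P a) (1 / card A) := by
  obtain ⟨a₀, -, ha₀⟩ := exists_le_of_sum_le (f := fun _ ↦ (1 / card A : ℝ)) (g := P)
    univ_nonempty
    (by rw [sum_one_div_card, hP])
  calc (1 / card A : ℝ) = min (P a₀) (1 / card A) := (min_eq_right ha₀).symm
    _ ≤ ∑ a, min (P a) (1 / card A) :=
      single_le_sum (fun a _ ↦ le_min (hP0 a) (by positivity)) (mem_univ a₀)

lemma half_sum_abs_sub_one_div_card_le {P : A → ℝ} (hP0 : ∀ a, 0 ≤ P a)
    (hP : ∑ a, P a = 1) : 1 / 2 * ∑ a, |P a - 1 / card A| ≤ 1 - 1 / card A := by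
  rw [half_sum_abs_sub_one_div_card hP]
  linarith [one_div_card_le_sum_min hP0 hP]

lemma exists_half_sum_abs_sub_one_div_card_eq [DecidableEq A] {δ : ℝ} {s : ℕ} (hδ0 : 0 ≤ δ)
    (hδ1 : δ ≤ 1 - 1 / card A) (hs1 : 1 < s) (hsδ : card A * (1 - δ) ≤ s) (hs : s ≤ card A) :
    ∃ (Q : A → ℝ) (S : Finset A), (∀ a, 0 ≤ Q a) ∧ ∑ a, Q a = 1 ∧
      1 / 2 * ∑ a, |Q a - 1 / card A| = δ ∧ #S = s ∧ ∑ a ∈ S, Q a = 1 := by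
  obtain ⟨a₀⟩ := ‹Nonempty A›
  obtain ⟨S, hS, rfl⟩ := exists_superset_card_eq (s := {a₀}) (by simpa using hs1.le) hs
  have ha₀ : a₀ ∈ S := hS (mem_singleton_self a₀)
  have hn : (0 : ℝ) < card A := by exact_mod_cast Fintype.card_pos
  have hS1 : (0 : ℝ) < #S - 1 := by
    rw [sub_pos]
    exact_mod_cast hs1
  set y := (1 - 1 / card A - δ) / (#S - 1)
  have hy0 : 0 ≤ y := div_nonneg (by linarith) hS1.le
  have hy1 : y ≤ 1 / card A := by
    have : 1 - δ ≤ #S * (1 / card A) := by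
      rw [mul_one_div, le_div_iff₀ hn]
      linarith
    rw [div_le_iff₀ hS1, mul_sub, mul_one, mul_comm]
    linarith
  have hyS : ((#S : ℝ) - 1) * y = 1 - 1 / card A - δ := mul_div_cancel₀ _ hS1.ne'
  set Q : A → ℝ := fun a ↦ if a = a₀ then 1 / card A + δ else if a ∈ S then y else 0
  have hQ₀ : Q a₀ = 1 / card A + δ := if_pos rfl
  have hQout (a : A) (ha : a ∉ S) : Q a = 0 := by
    simp [Q, ha, (ne_of_mem_of_not_mem ha₀ ha).symm]
  have hQrest (a : A) (ha : a ∈ S.erase a₀) : Q a = y := by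
    simp [Q, ne_of_mem_erase ha, mem_of_mem_erase ha]
  have hQ1 : ∑ a, Q a = 1 := by
    rw [sum_eq_add_card_erase_mul ha₀ hQout hQrest, hQ₀, hyS]
    ring
  refine ⟨Q, S, fun a ↦ ?_, hQ1, ?_, rfl, ?_⟩
  · simp only [Q]
    split_ifs <;> positivity
  · rw [half_sum_abs_sub_one_div_card hQ1,
      sum_eq_add_card_erase_mul (f := fun a ↦ min (Q a) (1 / card A)) (c := y) ha₀
        (fun a ha ↦ by simp [hQout a ha]) (fun a ha ↦ by simp only [hQrest a ha, min_eq_left hy1]),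
      hQ₀, min_eq_right (by linarith), hyS]
    ring
  · rwa [sum_subset (subset_univ S) fun a _ ha ↦ hQout a ha]

end Uniform

theorem stmt_1_general {A : Type*} [Fintype A] [DecidableEq A] (n : ℕ)
    (hn : Fintype.card A = n) (hn1 : 1 ≤ n)
    (P : A → ℝ) (hP0 : ∀ a, 0 ≤ P a) (hP1 : (∑ a, P a) = 1)
    (δ : ℝ) (hδ : (1 / 2) * ∑ a, |P a - 1 / n| = δ)
    (s : ℕ) (hs2 : (n : ℝ) * (1 - δ) < s) (hs3 : s ≤ n) :
    IsGreatest
      {v : ℝ | ∃ (P' : A → ℝ) (S : Finset A),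
        (∀ a, 0 ≤ P' a) ∧ (∑ a, P' a) = 1 ∧
        (1 / 2) * ∑ a, |P' a - 1 / n| = δ ∧
        S.card = s ∧ v = ∑ a ∈ S, P' a}
      1 := by
  subst hn
  have : Nonempty A := card_pos_iff.mp hn1
  have hδ0 : 0 ≤ δ := hδ ▸ by positivity
  have hδ1 : δ ≤ 1 - 1 / card A := hδ ▸ half_sum_abs_sub_one_div_card_le hP0 hP1
  have hs : 1 < s := by
    have hn : (0 : ℝ) < card A := by exact_mod_cast hn1
    have : (1 : ℝ) < s := by
      calc (1 : ℝ) = card A * (1 / card A) := by field_simp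
        _ ≤ card A * (1 - δ) := by gcongr; linarith
        _ < s := hs2
    exact_mod_cast this
  refine ⟨?_, ?_⟩
  · obtain ⟨Q, S, hQ0, hQ1, hQδ, hS, hQS⟩ :=
      exists_half_sum_abs_sub_one_div_card_eq hδ0 hδ1 hs hs2.le hs3
    exact ⟨Q, S, hQ0, hQ1, hQδ, hS, hQS.symm⟩
  · rintro v ⟨Q, T, hQ0, hQ1, -, -, rfl⟩
    exact hQ1 ▸ sum_le_univ_sum_of_nonneg hQ0

/-- If `P` is a distribution on `A` (`|A| = n ≥ 1`) with `Δ(P,U) = δ`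
and `s > n(1-δ)`, then there is a distribution `P'` with `Δ(P',U) = δ` whose sum
of `s` largest values equals `1`, and `1` is the maximum of such sums over all
distributions at distance `δ` from uniform. -/
theorem stmt_1 {A : Type*} [Fintype A] [DecidableEq A] (n : ℕ)
    (hn : Fintype.card A = n) (hn1 : 1 ≤ n)
    (P : A → ℝ) (hP0 : ∀ a, 0 ≤ P a) (hP1 : (∑ a, P a) = 1)
    (δ : ℝ) (hδ : (1 / 2) * ∑ a, |P a - 1 / n| = δ)
    (s : ℕ) (hs1 : 1 ≤ s) (hs2 : (n : ℝ) * (1 - δ) < s) (hs3 : s ≤ n) :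
    IsGreatest
      {v : ℝ | ∃ (P' : A → ℝ) (S : Finset A),
        (∀ a, 0 ≤ P' a) ∧ (∑ a, P' a) = 1 ∧
        (1 / 2) * ∑ a, |P' a - 1 / n| = δ ∧
        S.card = s ∧ v = ∑ a ∈ S, P' a}
      1 :=
  stmt_1_general n hn hn1 P hP0 hP1 δ hδ s hs2 hs3
end

section
/- Let p be a prime, and for a message m = (a_1,...,a_ν) ∈ Z_p^ν with ν ≤ l define f(m, k_1) = k_1^{ν+1} + a_1·k_1^ν + ... + a_ν·k_1 in Z_p. For any two distinct messages b ≠ a (possibly of different lengths ≤ l) and any t_0, t_1 ∈ Z_p, the number of k_1 ∈ Z_p such that f(b,k_1) − f(a,k_1) = t_1 − t_0 is at most l+1. -/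
/-- `f(m, k) = k^{ν+1} + m_1 k^ν + ... + m_ν k` for a message `m` of length `ν`
over `Z_p`. -/
def macF {p : ℕ} (m : List (ZMod p)) (k : ZMod p) : ZMod p :=
  k ^ (m.length + 1) + ∑ i : Fin m.length, m.get i * k ^ (m.length - i.val)

/-! `f(m, ·)` is evaluation of the polynomial `X^(ν+1) + m_1 X^ν + ... + m_ν X`, which has degree
`ν + 1`, zero constant term, and lists `m` among its coefficients. Hence `m` can be read back
from it, and for `a ≠ b` the difference of the two polynomials is not a constant, so
`f(b, X) - f(a, X) - (t₁ - t₀)` is a nonzero polynomial of degree at most `l + 1` over the field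
`Z_p` and has at most `l + 1` roots. -/

open Polynomial Finset

theorem Polynomial.card_filter_eval_eq_le {R : Type*} [CommRing R] [IsDomain R] [Fintype R]
    [DecidableEq R] {P : R[X]} {c : R} (hP : P ≠ C c) :
    #{k | P.eval k = c} ≤ P.natDegree := by
  rw [← natDegree_sub_C (a := c)]
  refine card_le_degree_of_subset_roots fun k hk => ?_
  rw [mem_roots (sub_ne_zero.mpr hP), IsRoot, eval_sub, eval_C, sub_eq_zero]
  exact (mem_filter.mp hk).2

section messagePoly

variable {R : Type*} [CommRing R]

noncomputable def messagePoly (m : List R) : R[X] :=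
  X ^ (m.length + 1) + ∑ i : Fin m.length, C (m.get i) * X ^ (m.length - i.val)

theorem coeff_messagePoly_zero (m : List R) : (messagePoly m).coeff 0 = 0 := by
  simp only [messagePoly, coeff_add, coeff_X_pow, finsetSum_coeff, coeff_C_mul_X_pow]
  refine (zero_add _).trans (sum_eq_zero fun i _ => if_neg ?_)
  have := i.isLt
  omega

theorem coeff_messagePoly_length_sub (m : List R) (j : Fin m.length) :
    (messagePoly m).coeff (m.length - j) = m.get j := by
  have hj := j.isLt
  simp only [messagePoly, coeff_add, coeff_X_pow, finsetSum_coeff, coeff_C_mul_X_pow]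
  rw [if_neg (by omega), zero_add, sum_eq_single j (fun i _ hij => if_neg ?_) (by simp), if_pos rfl]
  have := i.isLt
  exact fun h => hij (Fin.ext (by omega))

theorem natDegree_messagePoly [Nontrivial R] (m : List R) :
    (messagePoly m).natDegree = m.length + 1 := by
  have hsum :
      degree (∑ i : Fin m.length, C (m.get i) * X ^ (m.length - i.val)) < m.length + 1 := by
    refine (degree_sum_le _ _).trans_lt ((Finset.sup_lt_iff (WithBot.bot_lt_coe _)).2 fun i _ => ?_)
    exact (degree_C_mul_X_pow_le _ _).trans_lt (by exact_mod_cast Nat.lt_succ_of_le (Nat.sub_le _ _))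
  rw [messagePoly, natDegree_add_eq_left_of_degree_lt, natDegree_X_pow]
  rwa [degree_X_pow]

theorem messagePoly_injective [Nontrivial R] : Function.Injective (messagePoly (R := R)) := by
  intro a b h
  have hlen : a.length = b.length := by
    simpa only [natDegree_messagePoly, add_left_inj] using congrArg natDegree h
  refine List.ext_get hlen fun n ha hb => ?_
  calc a.get ⟨n, ha⟩ = (messagePoly a).coeff (a.length - n) :=
        (coeff_messagePoly_length_sub a ⟨n, ha⟩).symm
    _ = (messagePoly b).coeff (b.length - n) := by rw [h, hlen]
    _ = b.get ⟨n, hb⟩ := coeff_messagePoly_length_sub b ⟨n, hb⟩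

theorem messagePoly_sub_ne_C [Nontrivial R] {a b : List R} (hab : a ≠ b) (c : R) :
    messagePoly b - messagePoly a ≠ C c := by
  intro h
  have hc : c = 0 := by
    simpa [coeff_messagePoly_zero] using (congrArg (coeff · 0) h).symm
  rw [hc, map_zero, sub_eq_zero] at h
  exact hab (messagePoly_injective h).symm

end messagePoly

theorem eval_messagePoly {p : ℕ} (m : List (ZMod p)) (k : ZMod p) :
    (messagePoly m).eval k = macF m k := by
  simp [messagePoly, macF, eval_finsetSum]

theorem stmt_6_general (p : ℕ) (hp : p.Prime) (l : ℕ)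
    (a b : List (ZMod p))
    (hal : a.length ≤ l) (hbl : b.length ≤ l) (hab : a ≠ b)
    (t₀ t₁ : ZMod p) :
    haveI : Fact p.Prime := ⟨hp⟩
    ((Finset.univ.filter fun k₁ : ZMod p =>
        macF b k₁ - macF a k₁ = t₁ - t₀)).card ≤ l + 1 := by
  have : Fact p.Prime := ⟨hp⟩
  have hdeg : (messagePoly b - messagePoly a).natDegree ≤ l + 1 :=
    (natDegree_sub_le _ _).trans <| max_le
      (by rw [natDegree_messagePoly]; omega) (by rw [natDegree_messagePoly]; omega)
  simpa only [eval_sub, eval_messagePoly] using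
    (card_filter_eval_eq_le (messagePoly_sub_ne_C hab (t₁ - t₀))).trans hdeg

/-- For distinct nonempty messages `a ≠ b` of lengths at most `l`
over `Z_p` (`p` prime) and any tags `t_0, t_1`, the number of `k_1 ∈ Z_p` with
`f(b,k_1) − f(a,k_1) = t_1 − t_0` is at most `l + 1`. -/
theorem stmt_6 (p : ℕ) (hp : p.Prime) (l : ℕ)
    (a b : List (ZMod p)) (ha : a ≠ []) (hb : b ≠ [])
    (hal : a.length ≤ l) (hbl : b.length ≤ l) (hab : a ≠ b)
    (t₀ t₁ : ZMod p) :
    haveI : Fact p.Prime := ⟨hp⟩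
    ((Finset.univ.filter fun k₁ : ZMod p =>
        macF b k₁ - macF a k₁ = t₁ - t₀)).card ≤ l + 1 :=
  stmt_6_general p hp l a b hal hbl hab t₀ t₁
end

section
/- Let p be a prime, l ≥ 1, and suppose Δ(P_{k1},U) = μ_1/p and Δ(P_{k2},U) = μ_2/p for nonnegative reals μ_1, μ_2 with μ_1 ≤ p−(l+1) and μ_2 ≤ p−1, where k_1, k_2 are independent keys on Z_p. Then for any message b and tag t, Pr[f(b,k_1)+k_2 = t] ≤ (μ_1 + l + 1)(μ_2 + 1)/p. -/
/-! The event `f(b, k₁) + k₂ = t` fixes `k₂ = t - f(b, k₁)`, so its probability is at most the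
largest point mass of `k₂`; a key at statistical distance `μ₂ / p` from uniform has no point mass
above `(1 + μ₂) / p`, which is at most `(μ₁ + l + 1)(μ₂ + 1) / p`. -/

open Finset

section PointMass

variable {α : Type*} [Fintype α]

lemma sum_posPart_sub_eq_half_sum_abs_sub {P Q : α → ℝ} (h : ∑ x, P x = ∑ x, Q x) :
    ∑ x, max (P x - Q x) 0 = (1 / 2) * ∑ x, |P x - Q x| := by
  have hsum : ∑ x, (P x - Q x) = 0 := by rw [sum_sub_distrib, h, sub_self]
  have hpos : ∀ a : ℝ, max a 0 = (1 / 2) * (|a| + a) := by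
    intro a
    rcases le_total a 0 with ha | ha
    · rw [max_eq_right ha, abs_of_nonpos ha]; ring
    · rw [max_eq_left ha, abs_of_nonneg ha]; ring
  simp_rw [hpos, ← mul_sum, sum_add_distrib, hsum, add_zero]

lemma sub_le_half_sum_abs_sub {P Q : α → ℝ} (h : ∑ x, P x = ∑ x, Q x) (y : α) :
    P y - Q y ≤ (1 / 2) * ∑ x, |P x - Q x| :=
  calc P y - Q y ≤ max (P y - Q y) 0 := le_max_left _ _
    _ ≤ ∑ x, max (P x - Q x) 0 :=
      single_le_sum (f := fun x => max (P x - Q x) 0) (fun _ _ => le_max_right _ _) (mem_univ y)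
    _ = (1 / 2) * ∑ x, |P x - Q x| := sum_posPart_sub_eq_half_sum_abs_sub h

lemma le_one_add_div_card_of_half_sum_abs_sub_eq {P : α → ℝ} (hP : ∑ x, P x = 1) {μ : ℝ}
    (hδ : (1 / 2) * ∑ x, |P x - 1 / Fintype.card α| = μ / Fintype.card α) (y : α) :
    P y ≤ (1 + μ) / Fintype.card α := by
  have hmass : ∑ x, P x = ∑ _x : α, (1 / Fintype.card α : ℝ) := by
    have : Nonempty α := ⟨y⟩
    rw [hP, sum_const, card_univ, nsmul_eq_mul, mul_one_div_cancel (by positivity)]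
  have := sub_le_half_sum_abs_sub hmass y
  rw [hδ] at this
  rw [add_div]
  linarith

end PointMass

section Convolution

variable {α β : Type*} [AddCommGroup α] [DecidableEq α] [Fintype α] [Fintype β]

lemma sum_ite_add_eq_mul (g : β → α) (t : α) (P₁ : β → ℝ) (P₂ : α → ℝ) :
    (∑ x, ∑ y, if g x + y = t then P₁ x * P₂ y else 0) = ∑ x, P₁ x * P₂ (t - g x) := by
  refine sum_congr rfl fun x _ => ?_
  simp_rw [← eq_sub_iff_add_eq']
  rw [sum_ite_eq' univ (t - g x) (fun y => P₁ x * P₂ y), if_pos (mem_univ _)]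

lemma sum_ite_add_eq_mul_le (g : β → α) (t : α) {P₁ : β → ℝ} {P₂ : α → ℝ}
    (hP₁0 : ∀ x, 0 ≤ P₁ x) (hP₁1 : ∑ x, P₁ x = 1) {M : ℝ} (hM : ∀ y, P₂ y ≤ M) :
    (∑ x, ∑ y, if g x + y = t then P₁ x * P₂ y else 0) ≤ M :=
  calc (∑ x, ∑ y, if g x + y = t then P₁ x * P₂ y else 0)
      = ∑ x, P₁ x * P₂ (t - g x) := sum_ite_add_eq_mul g t P₁ P₂
    _ ≤ ∑ x, P₁ x * M := sum_le_sum fun x _ => mul_le_mul_of_nonneg_left (hM _) (hP₁0 x)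
    _ = M := by rw [← sum_mul, hP₁1, one_mul]

end Convolution

theorem stmt_10_general (p : ℕ) [Fact p.Prime] (l : ℕ)
    (P₁ P₂ : ZMod p → ℝ)
    (hP₁0 : ∀ x, 0 ≤ P₁ x) (hP₁1 : (∑ x, P₁ x) = 1)
    (hP₂1 : (∑ x, P₂ x) = 1)
    (μ₁ μ₂ : ℝ) (hμ₁0 : 0 ≤ μ₁) (hμ₂0 : 0 ≤ μ₂)
    (hδ₂ : (1 / 2) * ∑ x, |P₂ x - 1 / p| = μ₂ / p)
    (b : List (ZMod p))
    (t : ZMod p) :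
    (∑ x : ZMod p, ∑ y : ZMod p, if macF b x + y = t then P₁ x * P₂ y else 0)
      ≤ (μ₁ + l + 1) * (μ₂ + 1) / p := by
  have hmax (y : ZMod p) : P₂ y ≤ (1 + μ₂) / p := by
    simpa only [ZMod.card] using le_one_add_div_card_of_half_sum_abs_sub_eq (α := ZMod p) hP₂1
      (by simpa only [ZMod.card] using hδ₂) y
  calc _ ≤ (1 + μ₂) / p := sum_ite_add_eq_mul_le (macF b) t hP₁0 hP₁1 hmax
    _ ≤ (μ₁ + l + 1) * (μ₂ + 1) / p := by
      gcongr
      nlinarith [(Nat.cast_nonneg l : (0 : ℝ) ≤ l)]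

/-- With independent keys on `Z_p` whose distances from uniform
are `μ₁/p` and `μ₂/p`, where `0 ≤ μ₁ ≤ p − (l+1)` and `0 ≤ μ₂ ≤ p − 1`, for any
message `b` (nonempty, length `≤ l`) and tag `t`,
`Pr[f(b,k₁) + k₂ = t] ≤ (μ₁ + l + 1)(μ₂ + 1)/p`. -/
theorem stmt_10 (p : ℕ) (hp : p.Prime) [Fact p.Prime] (l : ℕ) (hl : 1 ≤ l)
    (P₁ P₂ : ZMod p → ℝ)
    (hP₁0 : ∀ x, 0 ≤ P₁ x) (hP₁1 : (∑ x, P₁ x) = 1)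
    (hP₂0 : ∀ x, 0 ≤ P₂ x) (hP₂1 : (∑ x, P₂ x) = 1)
    (μ₁ μ₂ : ℝ) (hμ₁0 : 0 ≤ μ₁) (hμ₂0 : 0 ≤ μ₂)
    (hδ₁ : (1 / 2) * ∑ x, |P₁ x - 1 / p| = μ₁ / p)
    (hδ₂ : (1 / 2) * ∑ x, |P₂ x - 1 / p| = μ₂ / p)
    (hμ₁ : μ₁ ≤ p - (l + 1)) (hμ₂ : μ₂ ≤ p - 1)
    (b : List (ZMod p)) (hb : b ≠ []) (hbl : b.length ≤ l)
    (t : ZMod p) :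
    (∑ x : ZMod p, ∑ y : ZMod p, if macF b x + y = t then P₁ x * P₂ y else 0)
      ≤ (μ₁ + l + 1) * (μ₂ + 1) / p :=
  stmt_10_general p l P₁ P₂ hP₁0 hP₁1 hP₂1 μ₁ μ₂ hμ₁0 hμ₂0 hδ₂ b t
end

section
/- Let A = {a_1,...,a_n} with uniform distribution U, and let P be a distribution on A sorted so that P(a_1) ≥ P(a_2) ≥ ... ≥ P(a_n), with |{a : P(a) > 1/n}| ≥ 2. Define P* by P*(a_1) = P(a_1) + (P(a_2) − 1/n), P*(a_2) = 1/n, and P*(a_i) = P(a_i) for i ≥ 3. Then P* is a probability distribution, Δ(P*,U) = Δ(P,U), and the number of elements with P*-probability strictly greater than 1/n is strictly smaller than for P. -/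
/-!
The map `T₊` moves the excess `P(a₂) - 1/n` of the second-largest atom onto the largest one.
Both atoms stay on the same side of `1/n`, so their total deviation
`|P(a₁) - 1/n| + |P(a₂) - 1/n|` is unchanged, and so is the total mass; the only atom that
changes status is `a₂`, which drops from above `1/n` to exactly `1/n`.
-/

open Finset

theorem sum_eq_sum_of_eq_off_pair {α : Type*} [Fintype α] {f g : α → ℝ} {a b : α} (hab : a ≠ b)
    (hoff : ∀ x, x ≠ a → x ≠ b → f x = g x) (hpair : f a + f b = g a + g b) :
    ∑ x, f x = ∑ x, g x := by
  rw [← sub_eq_zero, ← sum_sub_distrib,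
    Fintype.sum_eq_add a b hab fun x hx => sub_eq_zero.mpr (hoff x hx.1 hx.2)]
  linarith

section MoveExcess

variable {α : Type*} [DecidableEq α]

def moveExcess (P : α → ℝ) (a b : α) (c : ℝ) : α → ℝ :=
  Function.update (Function.update P a (P a + (P b - c))) b c

variable {P : α → ℝ} {a b : α} {c : ℝ}

theorem moveExcess_apply_left (hab : a ≠ b) : moveExcess P a b c a = P a + (P b - c) := by
  simp [moveExcess, hab]

theorem moveExcess_apply_right : moveExcess P a b c b = c := by
  simp [moveExcess]

theorem moveExcess_apply_of_ne {x : α} (hxa : x ≠ a) (hxb : x ≠ b) :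
    moveExcess P a b c x = P x := by
  simp [moveExcess, hxa, hxb]

theorem moveExcess_nonneg (hab : a ≠ b) (hP : ∀ x, 0 ≤ P x) (hc : 0 ≤ c) (hcb : c ≤ P b) (x : α) :
    0 ≤ moveExcess P a b c x := by
  by_cases hxa : x = a
  · subst hxa; rw [moveExcess_apply_left hab]; linarith [hP x]
  by_cases hxb : x = b
  · subst hxb; rwa [moveExcess_apply_right]
  rw [moveExcess_apply_of_ne hxa hxb]; exact hP x

theorem sum_moveExcess [Fintype α] (hab : a ≠ b) : ∑ x, moveExcess P a b c x = ∑ x, P x :=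
  sum_eq_sum_of_eq_off_pair hab (fun _ => moveExcess_apply_of_ne)
    (by rw [moveExcess_apply_left hab, moveExcess_apply_right]; ring)

theorem sum_abs_moveExcess_sub [Fintype α] (hab : a ≠ b) (hca : c ≤ P a) (hcb : c ≤ P b) :
    ∑ x, |moveExcess P a b c x - c| = ∑ x, |P x - c| :=
  sum_eq_sum_of_eq_off_pair hab (fun x hxa hxb => by rw [moveExcess_apply_of_ne hxa hxb])
    (by
      rw [moveExcess_apply_left hab, moveExcess_apply_right, sub_self, abs_zero,
        abs_of_nonneg (by linarith), abs_of_nonneg (by linarith), abs_of_nonneg (by linarith)]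
      ring)

theorem filter_lt_moveExcess [Fintype α] (hab : a ≠ b) (hca : c < P a) (hcb : c ≤ P b) :
    ({x | c < moveExcess P a b c x} : Finset α) = ({x | c < P x} : Finset α).erase b := by
  ext x
  simp only [mem_erase, mem_filter, mem_univ, true_and]
  by_cases hxb : x = b
  · subst hxb; simp [moveExcess_apply_right]
  by_cases hxa : x = a
  · subst hxa; simp only [moveExcess_apply_left hab, hxb, ne_eq, not_false_eq_true, true_and]
    constructor <;> intro <;> linarith
  simp [moveExcess_apply_of_ne hxa hxb, hxb]

theorem card_filter_lt_moveExcess_lt [Fintype α] (hab : a ≠ b) (hca : c < P a) (hcb : c < P b) :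
    #{x | c < moveExcess P a b c x} < #{x | c < P x} := by
  rw [filter_lt_moveExcess hab hca hcb.le]
  exact card_erase_lt_of_mem (by simpa using hcb)

end MoveExcess

theorem lt_apply_one_of_two_le_card_filter_lt {n : ℕ} (hn : 2 ≤ n) {P : Fin n → ℝ}
    (hP : Antitone P) {c : ℝ} (hcard : 2 ≤ #{i | c < P i}) : c < P ⟨1, by omega⟩ := by
  by_contra! h
  have hsub : ({i | c < P i} : Finset (Fin n)) ⊆ {⟨0, by omega⟩} := by
    intro i hi
    rw [mem_singleton, Fin.ext_iff, Fin.val_mk]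
    by_contra hi0
    have h1i : (⟨1, by omega⟩ : Fin n) ≤ i := Fin.le_def.mpr (Nat.one_le_iff_ne_zero.mpr hi0)
    exact (mem_filter.mp hi).2.not_ge ((hP h1i).trans h)
  have := card_le_card hsub
  rw [card_singleton] at this
  omega

/-- Let `P` be a distribution on `{a_1,…,a_n}` sorted in
decreasing order with at least two elements above the uniform level `1/n`.
The transformation `T₊` producing `P*` with `P*(a_1) = P(a_1) + (P(a_2) − 1/n)`,
`P*(a_2) = 1/n`, `P*(a_i) = P(a_i)` otherwise, yields a probability
distribution with the same statistical distance to uniform and strictly fewer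
elements above `1/n`. -/
theorem stmt_14 (n : ℕ) (hn : 2 ≤ n)
    (P : Fin n → ℝ) (hP0 : ∀ i, 0 ≤ P i) (hP1 : (∑ i, P i) = 1)
    (hsorted : ∀ i j : Fin n, i ≤ j → P j ≤ P i)
    (hplus : 2 ≤ (univ.filter fun i => 1 / (n : ℝ) < P i).card)
    (Pstar : Fin n → ℝ)
    (hPstar : ∀ i : Fin n,
      Pstar i =
        if i.val = 0 then P ⟨0, by omega⟩ + (P ⟨1, by omega⟩ - 1 / n)
        else if i.val = 1 then 1 / n
        else P i) :
    (∀ i, 0 ≤ Pstar i) ∧ (∑ i, Pstar i) = 1 ∧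
    (1 / 2) * ∑ i, |Pstar i - 1 / n| = (1 / 2) * ∑ i, |P i - 1 / n| ∧
    (univ.filter fun i => 1 / (n : ℝ) < Pstar i).card
      < (univ.filter fun i => 1 / (n : ℝ) < P i).card := by
  set i₀ : Fin n := ⟨0, by omega⟩
  set i₁ : Fin n := ⟨1, by omega⟩
  have hne : i₀ ≠ i₁ := by simp [i₀, i₁, Fin.ext_iff]
  have h₁ : 1 / (n : ℝ) < P i₁ := lt_apply_one_of_two_le_card_filter_lt hn hsorted hplus
  have h₀ : 1 / (n : ℝ) < P i₀ := h₁.trans_le (hsorted i₀ i₁ (by simp [i₀, i₁, Fin.le_def]))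
  obtain rfl : Pstar = moveExcess P i₀ i₁ (1 / n) := by
    funext i
    rw [hPstar i]
    split_ifs with hi0 hi1
    · rw [show i = i₀ from Fin.ext hi0, moveExcess_apply_left hne]
    · rw [show i = i₁ from Fin.ext hi1, moveExcess_apply_right]
    · rw [moveExcess_apply_of_ne (Fin.ne_of_val_ne hi0) (Fin.ne_of_val_ne hi1)]
  exact ⟨moveExcess_nonneg hne hP0 (by positivity) h₁.le, (sum_moveExcess hne).trans hP1,
    by rw [sum_abs_moveExcess_sub hne h₀.le h₁.le], card_filter_lt_moveExcess_lt hne h₀ h₁⟩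
end

section
/- Let p be a prime, l ≥ 1 with l+1 < p, and let k_1, k_2 be uniform and independent on Z_p. For the polynomial MAC S((k_1,k_2), m) = k_1^{ν+1} + m_1 k_1^ν + ... + m_ν k_1 + k_2 on messages m ∈ Z_p^{≤l}, the advantage of any one-time forgery adversary is at most (l+1)/p: that is, for all a ≠ b and all functions φ: Z_p → Z_p (the adversary's choice of forged tag as a function of the observed tag t_0 = S((k_1,k_2),a)), Pr[S((k_1,k_2), b) = φ(S((k_1,k_2), a))] ≤ (l+1)/p. -/
/-!
Write the tag as `macS (x, y) m = Q_m(x) + y`. For a fixed observed tag `t`, the key is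
determined by `x`, and a forgery succeeds exactly when `x` is a root of
`Q_b - Q_a - (φ t - t)`. Since `a ≠ b`, `Q_b - Q_a` is a nonconstant polynomial of degree
at most `l + 1`, so each of the `p` possible tags admits at most `l + 1` successful keys.
-/

/-- The tag of a message `m` of length `ν ≤ l` under key `(k₁, k₂)`:
`S((k₁,k₂), m) = k₁^{ν+1} + m_1 k₁^ν + ... + m_ν k₁ + k₂` over `Z_p`. -/
def macS {p : ℕ} (k : ZMod p × ZMod p) (m : List (ZMod p)) : ZMod p :=
  k.1 ^ (m.length + 1) + (∑ i : Fin m.length, m.get i * k.1 ^ (m.length - i.val)) + k.2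

open Polynomial Finset

section TagPoly

variable {R : Type*} [CommRing R]

noncomputable def tagPoly (m : List R) : R[X] :=
  X ^ (m.length + 1) + ∑ i : Fin m.length, C (m.get i) * X ^ (m.length - i.val)

theorem natDegree_tagPoly_le (m : List R) : (tagPoly m).natDegree ≤ m.length + 1 := by
  refine natDegree_add_le_of_degree_le (natDegree_X_pow_le _)
    (natDegree_sum_le_of_forall_le _ _ fun i _ => ?_)
  exact (natDegree_C_mul_X_pow_le _ _).trans (by omega)

theorem coeff_tagPoly (m : List R) (d : ℕ) :
    (tagPoly m).coeff d = (if d = m.length + 1 then 1 else 0)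
      + ∑ i : Fin m.length, if d = m.length - i.val then m.get i else 0 := by
  simp [tagPoly, finsetSum_coeff, coeff_C_mul, coeff_X_pow]

theorem coeff_tagPoly_length_succ (m : List R) : (tagPoly m).coeff (m.length + 1) = 1 := by
  rw [coeff_tagPoly, if_pos rfl, sum_eq_zero fun i _ => if_neg (by omega), add_zero]

theorem coeff_tagPoly_of_length_succ_lt (m : List R) {d : ℕ} (hd : m.length + 1 < d) :
    (tagPoly m).coeff d = 0 := by
  rw [coeff_tagPoly, if_neg (by omega), sum_eq_zero fun i _ => if_neg (by omega), add_zero]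

theorem coeff_tagPoly_length_sub (m : List R) (j : Fin m.length) :
    (tagPoly m).coeff (m.length - j.val) = m.get j := by
  rw [coeff_tagPoly, if_neg (by omega), zero_add, sum_eq_single j (fun i _ hij => if_neg ?_)
    (by simp), if_pos rfl]
  have := Fin.val_ne_of_ne hij
  omega

theorem exists_coeff_tagPoly_sub_ne_zero [Nontrivial R] {a b : List R} (hab : a ≠ b) :
    ∃ d, 1 ≤ d ∧ (tagPoly b - tagPoly a).coeff d ≠ 0 := by
  rcases lt_trichotomy a.length b.length with hlen | hlen | hlen
  · refine ⟨b.length + 1, by omega, ?_⟩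
    simp [coeff_tagPoly_length_succ, coeff_tagPoly_of_length_succ_lt a (d := b.length + 1)
      (by omega)]
  · obtain ⟨i, ha, hb, hne⟩ : ∃ i, ∃ (ha : i < a.length) (hb : i < b.length),
        a.get ⟨i, ha⟩ ≠ b.get ⟨i, hb⟩ := by
      by_contra! h
      exact hab (List.ext_get hlen h)
    refine ⟨a.length - i, by omega, ?_⟩
    have hcb : (tagPoly b).coeff (a.length - i) = b.get ⟨i, hb⟩ := by
      rw [hlen]; exact coeff_tagPoly_length_sub b ⟨i, hb⟩
    rw [coeff_sub, hcb, coeff_tagPoly_length_sub a ⟨i, ha⟩, sub_ne_zero]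
    exact hne.symm
  · refine ⟨a.length + 1, by omega, ?_⟩
    simp [coeff_tagPoly_length_succ, coeff_tagPoly_of_length_succ_lt b (d := a.length + 1)
      (by omega)]

theorem degree_tagPoly_sub_pos [Nontrivial R] {a b : List R} (hab : a ≠ b) :
    0 < (tagPoly b - tagPoly a).degree := by
  obtain ⟨d, hd, hcoeff⟩ := exists_coeff_tagPoly_sub_ne_zero hab
  exact natDegree_pos_iff_degree_pos.mp (hd.trans (le_natDegree_of_ne_zero hcoeff))

end TagPoly

theorem macS_eq_eval_tagPoly {p : ℕ} (k : ZMod p × ZMod p) (m : List (ZMod p)) :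
    macS k m = (tagPoly m).eval k.1 + k.2 := by
  simp [macS, tagPoly, eval_finsetSum]

section Counting

variable {R : Type*} [CommRing R] [IsDomain R] [Fintype R] [DecidableEq R]

theorem card_filter_eval_eq_le {D : R[X]} (hD : 0 < D.degree) (c : R) :
    #{x | D.eval x = c} ≤ D.natDegree := by
  have hne : D - C c ≠ 0 := fun h =>
    (degree_C_le (a := c)).not_gt (sub_eq_zero.mp h ▸ hD)
  rw [← natDegree_sub_C (a := c)]
  refine card_le_degree_of_subset_roots fun x hx => ?_
  rw [mem_roots hne, IsRoot, eval_sub, eval_C, sub_eq_zero]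
  exact (mem_filter.mp hx).2

theorem card_filter_eval_add_eq_comp_le {P Q : R[X]} (hQP : 0 < (Q - P).degree)
    (φ : R → R) :
    #{k : R × R | Q.eval k.1 + k.2 = φ (P.eval k.1 + k.2)}
      ≤ (Q - P).natDegree * Fintype.card R := by
  set s : Finset (R × R) := {k | Q.eval k.1 + k.2 = φ (P.eval k.1 + k.2)}
  refine card_le_mul_card_image_of_maps_to (f := fun k => P.eval k.1 + k.2)
    (fun _ _ => mem_univ _) _ fun t _ => ?_
  have hroot : ∀ k ∈ {k ∈ s | P.eval k.1 + k.2 = t},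
      k.1 ∈ ({x | (Q - P).eval x = φ t - t} : Finset R) := by
    intro k hk
    simp only [s, mem_filter, mem_univ, true_and] at hk ⊢
    rw [eval_sub, ← hk.2, ← hk.1]
    ring
  have hinj : Set.InjOn Prod.fst (↑{k ∈ s | P.eval k.1 + k.2 = t} : Set (R × R)) := by
    intro k hk k' hk' h1
    simp only [coe_filter] at hk hk'
    exact Prod.ext h1 (add_left_cancel (a := P.eval k.1) (by rw [hk.2, h1, hk'.2]))
  exact (card_le_card_of_injOn _ hroot hinj).trans (card_filter_eval_eq_le hQP _)

end Counting

theorem stmt_16_general (p : ℕ) [Fact p.Prime] (l : ℕ)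
    (a b : List (ZMod p))
    (hal : a.length ≤ l) (hbl : b.length ≤ l) (hab : a ≠ b)
    (φ : ZMod p → ZMod p) :
    (((Finset.univ.filter fun k : ZMod p × ZMod p =>
        macS k b = φ (macS k a))).card : ℝ) / (p ^ 2)
      ≤ (l + 1) / p := by
  have hdeg : (tagPoly b - tagPoly a).natDegree ≤ l + 1 :=
    (natDegree_sub_le_of_le (natDegree_tagPoly_le b) (natDegree_tagPoly_le a)).trans
      (by omega)
  have hcount : #{k : ZMod p × ZMod p | macS k b = φ (macS k a)} ≤ (l + 1) * p := by
    simp_rw [macS_eq_eval_tagPoly]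
    simpa using (card_filter_eval_add_eq_comp_le (degree_tagPoly_sub_pos hab) φ).trans
      (Nat.mul_le_mul_right _ hdeg)
  have hp0 : (0 : ℝ) < p := by exact_mod_cast (Fact.out : p.Prime).pos
  rw [div_le_div_iff₀ (by positivity) hp0]
  calc (#{k : ZMod p × ZMod p | macS k b = φ (macS k a)} : ℝ) * p ≤ (l + 1) * p * p := by
        gcongr; exact_mod_cast hcount
    _ = (l + 1) * p ^ 2 := by ring

/-- For a prime `p`, `l ≥ 1` with `l + 1 < p`, uniform independent
keys `(k₁,k₂)` on `Z_p × Z_p`, distinct nonempty messages `a ≠ b` of length at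
most `l`, and any adversary strategy `φ : Z_p → Z_p` (choosing the forged tag as
a function of the observed tag `t₀ = S((k₁,k₂),a)`), the probability of a
successful forgery is at most `(l+1)/p`:
`Pr[S((k₁,k₂), b) = φ(S((k₁,k₂), a))] ≤ (l+1)/p` (probability with respect to
the uniform distribution on the `p²` key pairs). -/
theorem stmt_16 (p : ℕ) (hp : p.Prime) [Fact p.Prime] (l : ℕ) (hl : 1 ≤ l)
    (hlp : l + 1 < p)
    (a b : List (ZMod p)) (ha : a ≠ []) (hb : b ≠ [])
    (hal : a.length ≤ l) (hbl : b.length ≤ l) (hab : a ≠ b)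
    (φ : ZMod p → ZMod p) :
    (((Finset.univ.filter fun k : ZMod p × ZMod p =>
        macS k b = φ (macS k a))).card : ℝ) / (p ^ 2)
      ≤ (l + 1) / p :=
  stmt_16_general p l a b hal hbl hab φ
end
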